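/- arXiv:1801.02267 — 2 statements merged into one kernel-verified Lean document; each statement's English description precedes it below -/
import Mathlib

section
/- Fix N ∈ ℕ and real a1, a2 > 0 and b > a1 + a2 + 2N + 2, and let L be the Hahn moment functional L[f] = Σ_{x=0}^{∞} f(x)·(a1)_x (a2)_x / ((b+1)_x x!) defined on real polynomials of degree ≤ 2N + 2 (the series converges for such f). Suppose P_0, …, P_{N+1} are monic polynomials with deg P_n = n, L[P_n P_m] = 0 for n ≠ m with n, m ≤ N+1, L[P_n^2] ≠ 0 for n ≤ N, and x P_n = P_{n+1} + β_n P_n + γ_n P_{n−1} for n ≤ N (P_{−1} = 0, γ_0 = 0). Then for every n ≤ N: β_n = [ (b + 2 − a1 − a2) a1 a2 − n(a1 + a2 + b)(n + a1 + a2 − b − 1) ] / [ (2n + a1 + a2 − b)(2n + a1 + a2 − b − 2) ]. -/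
open Polynomial

namespace HahnBetaAux

noncomputable section

lemma hasse_top (f : ℝ[X]) (j : ℕ) (hf : f.natDegree ≤ j) :
    hasseDeriv j f = C (f.coeff j) := by
  ext n
  rw [hasseDeriv_coeff, coeff_C]
  rcases n with _ | n
  · simp
  · have h : f.natDegree < n + 1 + j := by omega
    simp [coeff_eq_zero_of_natDegree_lt h]

lemma hasse_top1 (f : ℝ[X]) (j : ℕ) (hf : f.natDegree ≤ j + 1) :
    hasseDeriv j f = C (f.coeff j) + C ((j + 1 : ℕ) * f.coeff (j + 1)) * X := by
  ext n
  rw [hasseDeriv_coeff]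
  simp only [coeff_add, coeff_C_mul, coeff_C, coeff_X]
  rcases n with _ | n
  · simp
  · rcases n with _ | n
    · rw [add_comm 1 j, Nat.choose_succ_self_right]
      norm_num
    · have h : f.natDegree < n + 2 + j := by omega
      simp [coeff_eq_zero_of_natDegree_lt h]

lemma hasse_top2 (f : ℝ[X]) (j : ℕ) (hf : f.natDegree ≤ j + 2) :
    hasseDeriv j f = C (f.coeff j) + C ((j + 1 : ℕ) * f.coeff (j + 1)) * X
      + C (((j + 2).choose 2 : ℕ) * f.coeff (j + 2)) * X ^ 2 := by
  have e2 : (j + 2).choose j = (j + 2).choose 2 := by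
    rw [← Nat.choose_symm (by omega : 2 ≤ j + 2)]
    congr 1
  ext n
  rw [hasseDeriv_coeff]
  simp only [coeff_add, coeff_C_mul, coeff_C, coeff_X, coeff_X_pow]
  rcases n with _ | n
  · simp
  · rcases n with _ | n
    · rw [add_comm 1 j, Nat.choose_succ_self_right]
      norm_num
    · rcases n with _ | n
      · rw [add_comm 2 j, e2]
        norm_num
      · have h : f.natDegree < n + 3 + j := by omega
        simp [coeff_eq_zero_of_natDegree_lt h]

lemma hasse_top3 (f : ℝ[X]) (j : ℕ) (hf : f.natDegree ≤ j + 3) :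
    hasseDeriv j f = C (f.coeff j) + C ((j + 1 : ℕ) * f.coeff (j + 1)) * X
      + C (((j + 2).choose 2 : ℕ) * f.coeff (j + 2)) * X ^ 2
      + C (((j + 3).choose 3 : ℕ) * f.coeff (j + 3)) * X ^ 3 := by
  have e2 : (j + 2).choose j = (j + 2).choose 2 := by
    rw [← Nat.choose_symm (by omega : 2 ≤ j + 2)]
    congr 1
  have e3 : (j + 3).choose j = (j + 3).choose 3 := by
    rw [← Nat.choose_symm (by omega : 3 ≤ j + 3)]
    congr 1
  ext n
  rw [hasseDeriv_coeff]
  simp only [coeff_add, coeff_C_mul, coeff_C, coeff_X, coeff_X_pow]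
  rcases n with _ | n
  · simp
  · rcases n with _ | n
    · rw [add_comm 1 j, Nat.choose_succ_self_right]
      norm_num
    · rcases n with _ | n
      · rw [add_comm 2 j, e2]
        norm_num
      · rcases n with _ | n
        · rw [add_comm 3 j, e3]
          norm_num
        · have h : f.natDegree < n + 4 + j := by omega
          simp [coeff_eq_zero_of_natDegree_lt h]

end

end HahnBetaAux

namespace HahnBetaAux

noncomputable section
open Polynomial

def dlt (f : ℝ[X]) : ℝ[X] := taylor 1 f - f
def nab (f : ℝ[X]) : ℝ[X] := f - taylor (-1) f

lemma dlt_coeff_top (f : ℝ[X]) (j : ℕ) (hf : f.natDegree ≤ j) :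
    (dlt f).coeff j = 0 := by
  rw [dlt, coeff_sub, taylor_coeff, hasse_top f j hf]
  simp

lemma natDegree_dlt_le (f : ℝ[X]) (d : ℕ) (hf : f.natDegree ≤ d + 1) :
    (dlt f).natDegree ≤ d := by
  rw [natDegree_le_iff_coeff_eq_zero]
  intro M hM
  exact dlt_coeff_top f M (by omega)

lemma nab_coeff_top (f : ℝ[X]) (j : ℕ) (hf : f.natDegree ≤ j) :
    (nab f).coeff j = 0 := by
  rw [nab, coeff_sub, taylor_coeff, hasse_top f j hf]
  simp

lemma natDegree_nab_le (f : ℝ[X]) (d : ℕ) (hf : f.natDegree ≤ d + 1) :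
    (nab f).natDegree ≤ d := by
  rw [natDegree_le_iff_coeff_eq_zero]
  intro M hM
  exact nab_coeff_top f M (by omega)

lemma dlt_coeff1 (f : ℝ[X]) (j : ℕ) (hf : f.natDegree ≤ j + 1) :
    (dlt f).coeff j = (j + 1 : ℕ) * f.coeff (j + 1) := by
  rw [dlt, coeff_sub, taylor_coeff, hasse_top1 f j hf]
  simp

lemma nab_coeff1 (f : ℝ[X]) (j : ℕ) (hf : f.natDegree ≤ j + 1) :
    (nab f).coeff j = (j + 1 : ℕ) * f.coeff (j + 1) := by
  rw [nab, coeff_sub, taylor_coeff, hasse_top1 f j hf]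
  simp

lemma dlt_coeff2 (f : ℝ[X]) (j : ℕ) (hf : f.natDegree ≤ j + 2) :
    (dlt f).coeff j = (j + 1 : ℕ) * f.coeff (j + 1)
      + ((j + 2).choose 2 : ℕ) * f.coeff (j + 2) := by
  rw [dlt, coeff_sub, taylor_coeff, hasse_top2 f j hf]
  simp
  ring

lemma nab_coeff2 (f : ℝ[X]) (j : ℕ) (hf : f.natDegree ≤ j + 2) :
    (nab f).coeff j = (j + 1 : ℕ) * f.coeff (j + 1)
      - ((j + 2).choose 2 : ℕ) * f.coeff (j + 2) := by
  rw [nab, coeff_sub, taylor_coeff, hasse_top2 f j hf]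
  simp
  ring

lemma dlt_coeff3 (f : ℝ[X]) (j : ℕ) (hf : f.natDegree ≤ j + 3) :
    (dlt f).coeff j = (j + 1 : ℕ) * f.coeff (j + 1)
      + ((j + 2).choose 2 : ℕ) * f.coeff (j + 2)
      + ((j + 3).choose 3 : ℕ) * f.coeff (j + 3) := by
  rw [dlt, coeff_sub, taylor_coeff, hasse_top3 f j hf]
  simp
  ring

lemma nab_coeff3 (f : ℝ[X]) (j : ℕ) (hf : f.natDegree ≤ j + 3) :
    (nab f).coeff j = (j + 1 : ℕ) * f.coeff (j + 1)
      - ((j + 2).choose 2 : ℕ) * f.coeff (j + 2)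
      + ((j + 3).choose 3 : ℕ) * f.coeff (j + 3) := by
  rw [nab, coeff_sub, taylor_coeff, hasse_top3 f j hf]
  simp
  ring

end

end HahnBetaAux

namespace HahnBetaAux

noncomputable section
open Polynomial

def Ap (a1 a2 : ℝ) : ℝ[X] := X ^ 2 + C (a1 + a2) * X + C (a1 * a2)
def Bq (b : ℝ) : ℝ[X] := X ^ 2 + C b * X + C 0
def Hop (a1 a2 b : ℝ) (f : ℝ[X]) : ℝ[X] := Ap a1 a2 * dlt f - Bq b * nab f
def lam (a1 a2 b : ℝ) (m : ℕ) : ℝ := (m : ℝ) * ((m : ℝ) - 1) + (a1 + a2 - b) * m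
def cay (a1 a2 b : ℝ) (m : ℕ) : ℝ :=
  (m.choose 2 : ℕ) * (a1 + a2 + b) + (m : ℝ) * (a1 * a2)

lemma coeff_quad_mul (u v : ℝ) (g : ℝ[X]) (j : ℕ) :
    ((X ^ 2 + C u * X + C v) * g).coeff (j + 2)
      = g.coeff j + u * g.coeff (j + 1) + v * g.coeff (j + 2) := by
  have h1 : (X * g).coeff (j + 1 + 1) = g.coeff (j + 1) := coeff_X_mul g (j + 1)
  rw [add_mul, add_mul, coeff_add, coeff_add, coeff_X_pow_mul, mul_assoc, coeff_C_mul,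
    coeff_C_mul, show j + 2 = j + 1 + 1 from rfl, h1]

lemma coeff_quad_mul_one (u v : ℝ) (g : ℝ[X]) :
    ((X ^ 2 + C u * X + C v) * g).coeff 1 = u * g.coeff 0 + v * g.coeff 1 := by
  have h2 : (X ^ 2 * g).coeff 1 = 0 := by
    rw [sq, mul_assoc, show (1 : ℕ) = 0 + 1 from rfl, coeff_X_mul, mul_coeff_zero]
    simp
  have h1 : (X * g).coeff 1 = g.coeff 0 := coeff_X_mul g 0
  rw [add_mul, add_mul, coeff_add, coeff_add, h2, mul_assoc, coeff_C_mul, coeff_C_mul, h1,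
    zero_add]

lemma coeff_quad_mul_zero (u v : ℝ) (g : ℝ[X]) :
    ((X ^ 2 + C u * X + C v) * g).coeff 0 = v * g.coeff 0 := by
  rw [mul_coeff_zero]
  simp

lemma Hop_C (a1 a2 b : ℝ) (f : ℝ[X]) (hf : f.natDegree ≤ 0) : Hop a1 a2 b f = 0 := by
  have : f = C (f.coeff 0) := eq_C_of_natDegree_le_zero hf
  rw [Hop, dlt, nab, this, taylor_C]
  simp

lemma natDegree_Hop_le' (a1 a2 b : ℝ) (f : ℝ[X]) (m : ℕ) (hf : f.natDegree ≤ m + 1) :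
    (Hop a1 a2 b f).natDegree ≤ m + 2 := by
  refine (natDegree_sub_le _ _).trans ?_
  have hA : (Ap a1 a2).natDegree ≤ 2 := by unfold Ap; compute_degree
  have hB : (Bq b).natDegree ≤ 2 := by unfold Bq; compute_degree
  have h1 : (Ap a1 a2 * dlt f).natDegree ≤ 2 + m :=
    natDegree_mul_le.trans (add_le_add hA (natDegree_dlt_le f m hf))
  have h2 : (Bq b * nab f).natDegree ≤ 2 + m :=
    natDegree_mul_le.trans (add_le_add hB (natDegree_nab_le f m hf))
  simp only [sup_le_iff]
  omega

lemma Hop_coeff_top (a1 a2 b : ℝ) (f : ℝ[X]) (m : ℕ) (hf : f.natDegree ≤ m) :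
    (Hop a1 a2 b f).coeff m = lam a1 a2 b m * f.coeff m := by
  rcases m with _ | m
  · rw [Hop_C a1 a2 b f hf]
    simp [lam]
  rcases m with _ | j
  · rw [Hop, coeff_sub, Ap, Bq, coeff_quad_mul_one, coeff_quad_mul_one,
      dlt_coeff1 f 0 hf, nab_coeff1 f 0 hf, dlt_coeff_top f 1 hf, nab_coeff_top f 1 hf]
    simp [lam]
    ring
  · rw [Hop, coeff_sub, Ap, Bq, coeff_quad_mul, coeff_quad_mul,
      dlt_coeff2 f j hf, nab_coeff2 f j hf,
      dlt_coeff1 f (j + 1) hf, nab_coeff1 f (j + 1) hf,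
      dlt_coeff_top f (j + 2) hf, nab_coeff_top f (j + 2) hf,
      lam, Nat.cast_choose_two]
    push_cast
    ring

lemma Hop_coeff_succ_zero (a1 a2 b : ℝ) (f : ℝ[X]) (m : ℕ) (hf : f.natDegree ≤ m) :
    (Hop a1 a2 b f).coeff (m + 1) = 0 := by
  rcases m with _ | j
  · rw [Hop_C a1 a2 b f hf]
    simp
  · rw [Hop, coeff_sub, Ap, Bq, show j + 1 + 1 = j + 2 from rfl, coeff_quad_mul,
      coeff_quad_mul, dlt_coeff1 f j hf, nab_coeff1 f j hf,
      dlt_coeff_top f (j + 1) hf, nab_coeff_top f (j + 1) hf,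
      dlt_coeff_top f (j + 2) (hf.trans (by omega)),
      nab_coeff_top f (j + 2) (hf.trans (by omega))]
    ring

lemma Hop_coeff_sub (a1 a2 b : ℝ) (f : ℝ[X]) (m : ℕ) (hf : f.natDegree ≤ m + 1) :
    (Hop a1 a2 b f).coeff m
      = lam a1 a2 b m * f.coeff m + cay a1 a2 b (m + 1) * f.coeff (m + 1) := by
  rcases m with _ | m
  · rw [Hop, coeff_sub, Ap, Bq, coeff_quad_mul_zero, coeff_quad_mul_zero,
      dlt_coeff1 f 0 hf]
    simp [lam, cay]
  rcases m with _ | j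
  · rw [Hop, coeff_sub, Ap, Bq, coeff_quad_mul_one, coeff_quad_mul_one,
      dlt_coeff2 f 0 hf, nab_coeff2 f 0 hf, dlt_coeff1 f 1 hf, nab_coeff1 f 1 hf,
      lam, cay]
    norm_num
    ring
  · rw [Hop, coeff_sub, Ap, Bq, coeff_quad_mul, coeff_quad_mul,
      dlt_coeff3 f j hf, nab_coeff3 f j hf,
      dlt_coeff2 f (j + 1) hf, nab_coeff2 f (j + 1) hf,
      dlt_coeff1 f (j + 2) hf,
      lam, cay, Nat.cast_choose_two, Nat.cast_choose_two]
    push_cast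
    ring

lemma natDegree_Hop_sub_le (a1 a2 b : ℝ) (f : ℝ[X]) (m : ℕ) (hm : 1 ≤ m)
    (hf : f.natDegree ≤ m) :
    (Hop a1 a2 b f - C (lam a1 a2 b m) * f).natDegree ≤ m - 1 := by
  rw [natDegree_le_iff_coeff_eq_zero]
  intro M hM
  rw [coeff_sub, coeff_C_mul]
  rcases Nat.lt_or_ge M (m + 1) with h | h
  · have hMm : M = m := by omega
    subst hMm
    rw [Hop_coeff_top a1 a2 b f M hf, sub_self]
  rcases Nat.eq_or_lt_of_le h with h' | h'
  · rw [← h', Hop_coeff_succ_zero a1 a2 b f m hf,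
      coeff_eq_zero_of_natDegree_lt (by omega : f.natDegree < m + 1)]
    ring
  · obtain ⟨m', rfl⟩ : ∃ m', m = m' + 1 := ⟨m - 1, by omega⟩
    rw [coeff_eq_zero_of_natDegree_lt (lt_of_le_of_lt (natDegree_Hop_le' a1 a2 b f m' hf)
        (by omega)),
      coeff_eq_zero_of_natDegree_lt (by omega : f.natDegree < M)]
    ring

end

end HahnBetaAux

namespace HahnBetaAux

noncomputable section
open Polynomial

lemma ascPochhammer_eval_pos (c : ℝ) (hc : 0 < c) (n : ℕ) :
    0 < (ascPochhammer ℝ n).eval c := by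
  induction n with
  | zero => simp
  | succ n ih =>
    rw [ascPochhammer_succ_right]
    have : (0:ℝ) < c + n := by positivity
    simpa using mul_pos ih this

lemma pow_one_add_le (t : ℝ) (ht : 0 ≤ t) (K : ℕ) (h : (K : ℝ) * t ≤ 1) :
    (1 + t) ^ K ≤ 1 + (K : ℝ) * t + (K : ℝ) ^ 2 * t ^ 2 := by
  induction K with
  | zero => norm_num
  | succ K ih =>
    have hKc : (0:ℝ) ≤ (K:ℝ) := Nat.cast_nonneg K
    have h' : ((K:ℝ)+1) * t ≤ 1 := by push_cast at h; linarith
    have hK : (K : ℝ) * t ≤ 1 := by nlinarith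
    have ih' := ih hK
    have h1t : (0:ℝ) ≤ 1 + t := by linarith
    have hcube : (K:ℝ)^2 * t ≤ (K:ℝ) := by nlinarith
    have hcube' : (K:ℝ)^2 * t * t^2 ≤ (K:ℝ) * t^2 :=
      mul_le_mul_of_nonneg_right hcube (sq_nonneg t)
    push_cast
    calc (1 + t) ^ (K + 1) = (1 + t) ^ K * (1 + t) := by ring
      _ ≤ (1 + (K:ℝ)*t + (K:ℝ)^2*t^2) * (1 + t) := mul_le_mul_of_nonneg_right ih' h1t
      _ ≤ 1 + ((K:ℝ)+1)*t + ((K:ℝ)+1)^2*t^2 := by nlinarith [sq_nonneg t]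

lemma summable_pow_mul (a1 a2 b : ℝ) (ha1 : 0 < a1) (ha2 : 0 < a2)
    (w : ℕ → ℝ) (hpos : ∀ x, 0 < w x)
    (hrat : ∀ x : ℕ, w (x+1) * (((x:ℝ)+1) * (((x:ℝ)+1)+b)) = w x * (((x:ℝ)+a1) * ((x:ℝ)+a2)))
    (hb0 : 0 < b)
    (k : ℕ) (hk : (k:ℝ) < b - a1 - a2) :
    Summable (fun x : ℕ => (x:ℝ)^k * w x) := by
  have hE : 0 < a1 + a2 := by linarith
  have hF : 0 < a1 * a2 := mul_pos ha1 ha2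
  have hKc : (1:ℝ) ≤ ((k:ℝ) + 1) := by
    have : (0:ℝ) ≤ (k:ℝ) := Nat.cast_nonneg k
    linarith
  have hDpos : (0:ℝ) < b + 1 - (a1 + a2) - ((k:ℝ)+1) := by linarith
  set D : ℝ := b + 1 - (a1 + a2) - ((k:ℝ)+1) with hD
  set S : ℝ := (((k:ℝ)+1)^2 + ((k:ℝ)+1)*(a1+a2) + a1*a2)
    + (((k:ℝ)+1)*(a1*a2) + ((k:ℝ)+1)^2*(a1+a2)) + ((k:ℝ)+1)^2*(a1*a2) with hS
  obtain ⟨x₀, hx₀⟩ := exists_nat_ge (max ((k:ℝ)+1) (S / D))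
  have hx₀K : ((k:ℝ)+1) ≤ x₀ := le_trans (le_max_left _ _) hx₀
  have hx₀S : S / D ≤ x₀ := le_trans (le_max_right _ _) hx₀
  have hdec : ∀ x : ℕ, x₀ ≤ x → ((x:ℝ)+1)^(k+2) * w (x+1) ≤ (x:ℝ)^(k+2) * w x := by
    intro x hx
    have hxc : ((x₀:ℕ):ℝ) ≤ (x:ℝ) := Nat.cast_le.mpr hx
    set y : ℝ := (x : ℝ) with hy
    have hyK : ((k:ℝ)+1) ≤ y := le_trans hx₀K hxc
    have hy1 : (1:ℝ) ≤ y := le_trans hKc hyK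
    have hy0 : (0:ℝ) < y := by linarith
    have hyS : S ≤ D * y := by
      have h1 : S / D ≤ y := le_trans hx₀S hxc
      calc S = S / D * D := by field_simp
        _ ≤ y * D := mul_le_mul_of_nonneg_right h1 hDpos.le
        _ = D * y := mul_comm _ _
    -- polynomial inequality
    have hpoly : (y^2 + ((k:ℝ)+1)*y + ((k:ℝ)+1)^2) * ((y+a1)*(y+a2)) ≤ y^3 * (y+1+b) := by
      have t1 : S * y^2 ≤ D * y * y^2 := mul_le_mul_of_nonneg_right hyS (sq_nonneg y)
      have hK0 : (0:ℝ) ≤ (k:ℝ)+1 := by linarith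
      have t2 : 0 ≤ (((k:ℝ)+1)*(a1*a2) + ((k:ℝ)+1)^2*(a1+a2)) * (y*(y-1)) := by
        apply mul_nonneg
        · have h1 : (0:ℝ) ≤ ((k:ℝ)+1)*(a1*a2) := mul_nonneg hK0 hF.le
          have h2 : (0:ℝ) ≤ ((k:ℝ)+1)^2*(a1+a2) := mul_nonneg (sq_nonneg _) hE.le
          linarith
        · exact mul_nonneg (by linarith) (by linarith)
      have t3 : 0 ≤ (((k:ℝ)+1)^2*(a1*a2)) * (y^2-1) := by
        apply mul_nonneg (mul_nonneg (sq_nonneg _) hF.le)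
        nlinarith
      rw [hS, hD] at t1
      linarith [t1, t2, t3]
    -- power bound
    have hKy : ((k:ℝ)+1) * (1/y) ≤ 1 := by
      rw [mul_one_div, div_le_one hy0]
      exact hyK
    have hb1 : (1 + 1/y)^(k+1) ≤ 1 + ((k:ℝ)+1) * (1/y) + ((k:ℝ)+1)^2 * (1/y)^2 := by
      have := pow_one_add_le (1/y) (by positivity) (k+1) (by push_cast; exact hKy)
      push_cast at this
      exact this
    have e1 : (y+1)^(k+1) = y^(k+1) * (1+1/y)^(k+1) := by
      rw [← mul_pow]
      congr 1
      field_simp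
    have h2 : (y+1)^(k+1) * y^2 ≤ y^(k+1) * (y^2 + ((k:ℝ)+1)*y + ((k:ℝ)+1)^2) := by
      have e2 : (1 + ((k:ℝ)+1) * (1/y) + ((k:ℝ)+1)^2 * (1/y)^2) * y^2
          = y^2 + ((k:ℝ)+1)*y + ((k:ℝ)+1)^2 := by
        field_simp
      calc (y+1)^(k+1) * y^2 = y^(k+1) * ((1+1/y)^(k+1) * y^2) := by rw [e1]; ring
        _ ≤ y^(k+1) * ((1 + ((k:ℝ)+1) * (1/y) + ((k:ℝ)+1)^2 * (1/y)^2) * y^2) := by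
            apply mul_le_mul_of_nonneg_left _ (by positivity)
            exact mul_le_mul_of_nonneg_right hb1 (sq_nonneg y)
        _ = y^(k+1) * (y^2 + ((k:ℝ)+1)*y + ((k:ℝ)+1)^2) := by rw [e2]
    have hfin : (y+1)^(k+1) * y^2 * ((y+a1)*(y+a2)) ≤ y^(k+1) * (y^3 * (y+1+b)) := by
      calc (y+1)^(k+1) * y^2 * ((y+a1)*(y+a2))
          ≤ y^(k+1) * (y^2 + ((k:ℝ)+1)*y + ((k:ℝ)+1)^2) * ((y+a1)*(y+a2)) := by
            apply mul_le_mul_of_nonneg_right h2 (by nlinarith)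
        _ = y^(k+1) * ((y^2 + ((k:ℝ)+1)*y + ((k:ℝ)+1)^2) * ((y+a1)*(y+a2))) := by ring
        _ ≤ y^(k+1) * (y^3 * (y+1+b)) := by
            apply mul_le_mul_of_nonneg_left hpoly (by positivity)
    -- main polynomial comparison
    have hmain : (y+1)^(k+2) * ((y+a1)*(y+a2)) ≤ y^(k+2) * ((y+1)*((y+1)+b)) := by
      apply le_of_mul_le_mul_right _ (by positivity : (0:ℝ) < y^2)
      calc (y+1)^(k+2) * ((y+a1)*(y+a2)) * y^2
          = ((y+1)^(k+1) * y^2 * ((y+a1)*(y+a2))) * (y+1) := by ring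
        _ ≤ (y^(k+1) * (y^3 * (y+1+b))) * (y+1) := by
            apply mul_le_mul_of_nonneg_right hfin (by positivity)
        _ = y^(k+2) * ((y+1)*((y+1)+b)) * y^2 := by ring
    -- conclude using the weight ratio
    have hden : (0:ℝ) < (y+1) * ((y+1)+b) := by positivity
    have hr : w (x+1) * ((y+1)*((y+1)+b)) = w x * ((y+a1)*(y+a2)) := by
      rw [hy]
      exact hrat x
    apply le_of_mul_le_mul_right _ hden
    calc (y+1)^(k+2) * w (x+1) * ((y+1)*((y+1)+b))
        = (y+1)^(k+2) * (w (x+1) * ((y+1)*((y+1)+b))) := by ring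
      _ = (y+1)^(k+2) * (w x * ((y+a1)*(y+a2))) := by rw [hr]
      _ = w x * ((y+1)^(k+2) * ((y+a1)*(y+a2))) := by ring
      _ ≤ w x * (y^(k+2) * ((y+1)*((y+1)+b))) := by
          apply mul_le_mul_of_nonneg_left hmain (hpos x).le
      _ = y^(k+2) * w x * ((y+1)*((y+1)+b)) := by ring
  -- monotone from x₀ : bounded by value at x₀
  have hbound : ∀ x : ℕ, x₀ ≤ x → (x:ℝ)^(k+2) * w x ≤ (x₀:ℝ)^(k+2) * w x₀ := by
    intro x hx
    induction x, hx using Nat.le_induction with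
    | base => exact le_refl _
    | succ n hn ih =>
      calc ((n+1:ℕ):ℝ)^(k+2) * w (n+1) ≤ (n:ℝ)^(k+2) * w n := by
            have := hdec n hn
            push_cast
            push_cast at this
            exact this
        _ ≤ (x₀:ℝ)^(k+2) * w x₀ := ih
  -- comparison with 1/(x+1)^2
  set M : ℝ := (x₀:ℝ)^(k+2) * w x₀ with hM
  have hM0 : 0 ≤ M := by
    have := (hpos x₀).le
    positivity
  have hsum2 : Summable (fun x : ℕ => M * (1 / ((x:ℝ)+1)^2)) := by
    apply Summable.mul_left
    have h := (Real.summable_one_div_nat_pow (p := 2)).mpr (by norm_num)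
    have h' := (summable_nat_add_iff 1).mpr h
    apply h'.congr
    intro n
    push_cast
    ring
  rw [← summable_nat_add_iff (x₀ + 1)]
  apply Summable.of_nonneg_of_le _ _ hsum2
  · intro x
    have := (hpos (x + (x₀+1))).le
    positivity
  · intro x
    have hge : x₀ ≤ x + (x₀ + 1) := by omega
    have hb2 := hbound (x + (x₀+1)) hge
    set z : ℝ := ((x + (x₀+1) : ℕ):ℝ) with hz
    have hz1 : (x:ℝ)+1 ≤ z := by rw [hz]; push_cast; linarith
    have hz0 : (0:ℝ) < (x:ℝ)+1 := by positivity
    have hz2 : ((x:ℝ)+1)^2 ≤ z^2 := by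
      apply pow_le_pow_left₀ hz0.le hz1
    have hwnn := (hpos (x + (x₀+1))).le
    have key : z^k * w (x+(x₀+1)) * ((x:ℝ)+1)^2 ≤ M := by
      calc z^k * w (x+(x₀+1)) * ((x:ℝ)+1)^2
          ≤ z^k * w (x+(x₀+1)) * z^2 := by
            apply mul_le_mul_of_nonneg_left hz2
            positivity
        _ = z^(k+2) * w (x+(x₀+1)) := by ring
        _ ≤ M := hb2
    rw [mul_one_div, le_div_iff₀ (by positivity : (0:ℝ) < ((x:ℝ)+1)^2)]
    exact key

end

end HahnBetaAux

namespace HahnBetaAux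

noncomputable section
open Polynomial

lemma natDegree_Hop_le (a1 a2 b : ℝ) (f : ℝ[X]) (m : ℕ) (hf : f.natDegree ≤ m) :
    (Hop a1 a2 b f).natDegree ≤ m := by
  rcases m with _ | m
  · rw [Hop_C a1 a2 b f hf]
    simp
  · rw [natDegree_le_iff_coeff_eq_zero]
    intro M hM
    rcases Nat.eq_or_lt_of_le hM with h' | h'
    · rw [← h']
      exact Hop_coeff_succ_zero a1 a2 b f (m+1) hf
    · exact coeff_eq_zero_of_natDegree_lt
        (lt_of_le_of_lt (natDegree_Hop_le' a1 a2 b f m hf) h')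

lemma summable_eval_mul (w : ℕ → ℝ) (d : ℕ)
    (hS : ∀ k, k ≤ d → Summable fun x : ℕ => (x:ℝ)^k * w x)
    (p : ℝ[X]) (hp : p.natDegree ≤ d) :
    Summable fun x : ℕ => p.eval (x:ℝ) * w x := by
  have he : (fun x : ℕ => p.eval (x:ℝ) * w x)
      = fun x : ℕ => ∑ i ∈ Finset.range (d+1), p.coeff i * ((x:ℝ)^i * w x) := by
    funext x
    rw [eval_eq_sum_range' (by omega : p.natDegree < d+1), Finset.sum_mul]
    apply Finset.sum_congr rfl
    intros
    ring
  rw [he]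
  apply summable_sum
  intro i hi
  simp only [Finset.mem_range] at hi
  exact (hS i (by omega)).mul_left _

end

end HahnBetaAux

open HahnBetaAux

/-- recurrence coefficients βₙ of the Hahn polynomials,
orthogonal with respect to ρ(x) = (a₁)ₓ(a₂)ₓ/((b+1)ₓ x!). -/
theorem hahn_beta
    (N : ℕ) (a1 a2 b : ℝ) (ha1 : 0 < a1) (ha2 : 0 < a2)
    (hb : a1 + a2 + 2 * (N : ℝ) + 2 < b)
    (w : ℕ → ℝ)
    (hw : ∀ x : ℕ, w x =
      (ascPochhammer ℝ x).eval a1 * (ascPochhammer ℝ x).eval a2 /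
        ((ascPochhammer ℝ x).eval (b + 1) * x.factorial))
    (P : ℕ → Polynomial ℝ)
    (hmonic : ∀ n ≤ N + 1, (P n).Monic) (hdeg : ∀ n ≤ N + 1, (P n).natDegree = n)
    (horth : ∀ n m : ℕ, n ≤ N + 1 → m ≤ N + 1 → n ≠ m →
      (∑' x : ℕ, (P n * P m).eval (x : ℝ) * w x) = 0)
    (hnorm : ∀ n ≤ N, (∑' x : ℕ, (P n * P n).eval (x : ℝ) * w x) ≠ 0)
    (β γ : ℕ → ℝ) (hγ0 : γ 0 = 0)
    (hrec : ∀ n ≤ N, X * P n = P (n + 1) + C (β n) * P n + C (γ n) * P (n - 1)) :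
    ∀ n ≤ N,
      β n = ((b + 2 - a1 - a2) * a1 * a2
              - (n : ℝ) * (a1 + a2 + b) * ((n : ℝ) + a1 + a2 - b - 1)) /
            ((2 * (n : ℝ) + a1 + a2 - b) * (2 * (n : ℝ) + a1 + a2 - b - 2)) := by
  have hN0 : (0:ℝ) ≤ (N:ℝ) := Nat.cast_nonneg N
  have hb0 : (0:ℝ) < b := by linarith
  have hb1 : (0:ℝ) < b + 1 := by linarith
  -- weight positivity
  have hpos : ∀ x, 0 < w x := by
    intro x
    rw [hw x]
    exact div_pos
      (mul_pos (ascPochhammer_eval_pos a1 ha1 x) (ascPochhammer_eval_pos a2 ha2 x))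
      (mul_pos (ascPochhammer_eval_pos (b+1) hb1 x)
        (by exact_mod_cast Nat.cast_pos.mpr x.factorial_pos))
  -- Pearson ratio
  have hrat : ∀ x : ℕ, w (x+1) * (((x:ℝ)+1) * (((x:ℝ)+1)+b)) = w x * (((x:ℝ)+a1) * ((x:ℝ)+a2)) := by
    intro x
    have e1 : (ascPochhammer ℝ (x+1)).eval a1 = (ascPochhammer ℝ x).eval a1 * (a1 + x) := by
      rw [ascPochhammer_succ_right]
      simp
    have e2 : (ascPochhammer ℝ (x+1)).eval a2 = (ascPochhammer ℝ x).eval a2 * (a2 + x) := by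
      rw [ascPochhammer_succ_right]
      simp
    have e3 : (ascPochhammer ℝ (x+1)).eval (b+1) = (ascPochhammer ℝ x).eval (b+1) * (b+1+x) := by
      rw [ascPochhammer_succ_right]
      simp
    have hA : (ascPochhammer ℝ x).eval (b+1) ≠ 0 := (ascPochhammer_eval_pos (b+1) hb1 x).ne'
    have hfac : ((x.factorial : ℕ):ℝ) ≠ 0 := by
      exact_mod_cast x.factorial_ne_zero
    rw [hw (x+1), hw x, e1, e2, e3, Nat.factorial_succ]
    push_cast
    field_simp
    ring
  -- summability of polynomials against the weight
  have hsum : ∀ p : Polynomial ℝ, p.natDegree ≤ 2*N+2 →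
      Summable fun x : ℕ => p.eval (x:ℝ) * w x := by
    intro p hp
    apply summable_eval_mul w (2*N+2) _ p hp
    intro k hk
    apply summable_pow_mul a1 a2 b ha1 ha2 w hpos hrat hb0 k
    have : (k:ℝ) ≤ 2*(N:ℝ)+2 := by exact_mod_cast hk
    linarith
  set L : Polynomial ℝ → ℝ := fun p => ∑' x : ℕ, p.eval (x:ℝ) * w x with hL
  -- linearity of L
  have hLsub : ∀ p q : Polynomial ℝ, p.natDegree ≤ 2*N+2 → q.natDegree ≤ 2*N+2 →
      L (p - q) = L p - L q := by
    intro p q hp hq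
    rw [hL]
    simp only []
    rw [← Summable.tsum_sub (hsum p hp) (hsum q hq)]
    apply tsum_congr
    intro x
    rw [eval_sub]
    ring
  have hLadd : ∀ p q : Polynomial ℝ, p.natDegree ≤ 2*N+2 → q.natDegree ≤ 2*N+2 →
      L (p + q) = L p + L q := by
    intro p q hp hq
    rw [hL]
    simp only []
    rw [← Summable.tsum_add (hsum p hp) (hsum q hq)]
    apply tsum_congr
    intro x
    rw [eval_add]
    ring
  have hLsmul : ∀ (c : ℝ) (p : Polynomial ℝ), L (C c * p) = c * L p := by
    intro c p
    rw [hL]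
    simp only []
    rw [← tsum_mul_left]
    apply tsum_congr
    intro x
    rw [eval_mul, eval_C]
    ring
  have horthL : ∀ n m : ℕ, n ≤ N+1 → m ≤ N+1 → n ≠ m → L (P n * P m) = 0 := by
    intro n m h1 h2 h3
    rw [hL]
    exact horth n m h1 h2 h3
  have hnormL : ∀ n, n ≤ N → L (P n * P n) ≠ 0 := by
    intro n h1
    rw [hL]
    exact hnorm n h1
  have hP0 : P 0 = 1 := by
    have h := hmonic 0 (by omega)
    exact (h.natDegree_eq_zero).mp (hdeg 0 (by omega))
  have hctop : ∀ n, n ≤ N+1 → (P n).coeff n = 1 := by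
    intro n hn
    have h := (hmonic n hn).coeff_natDegree
    rwa [hdeg n hn] at h
  -- orthogonality to lower-degree polynomials
  have hLspan : ∀ k : ℕ, ∀ q : Polynomial ℝ, q.natDegree ≤ k → ∀ j, k < j → j ≤ N+1 →
      L (P j * q) = 0 := by
    intro k
    induction k with
    | zero =>
      intro q hq j hkj hjN
      have hqC : q = C (q.coeff 0) := eq_C_of_natDegree_le_zero hq
      have he : P j * q = C (q.coeff 0) * (P j * P 0) := by
        conv_lhs => rw [hqC]
        rw [hP0]
        ring
      rw [he, hLsmul, horthL j 0 hjN (by omega) (by omega)]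
      ring
    | succ k ih =>
      intro q hq j hkj hjN
      set c := q.coeff (k+1) with hc
      set q' : Polynomial ℝ := q - C c * P (k+1) with hq'
      have hk1N : k + 1 ≤ N + 1 := by omega
      have hdq' : q'.natDegree ≤ k := by
        rw [natDegree_le_iff_coeff_eq_zero]
        intro M hM
        rw [hq', coeff_sub, coeff_C_mul]
        rcases Nat.eq_or_lt_of_le hM with h' | h'
        · rw [← h', hctop (k+1) hk1N, ← hc]
          ring
        · rw [coeff_eq_zero_of_natDegree_lt (by omega : q.natDegree < M),
            coeff_eq_zero_of_natDegree_lt (by rw [hdeg (k+1) hk1N]; omega)]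
          ring
      have hsplit : P j * q = P j * q' + C c * (P j * P (k+1)) := by
        rw [hq']
        ring
      have hd1 : (P j * q').natDegree ≤ 2*N+2 :=
        natDegree_mul_le.trans (by rw [hdeg j hjN]; omega)
      have hd2 : (C c * (P j * P (k+1))).natDegree ≤ 2*N+2 :=
        (natDegree_C_mul_le _ _).trans (natDegree_mul_le.trans
          (by rw [hdeg j hjN, hdeg (k+1) hk1N]; omega))
      rw [hsplit, hLadd _ _ hd1 hd2, hLsmul, horthL j (k+1) hjN hk1N (by omega),
        ih q' hdq' j (by omega) hjN]
      ring
  -- summation by parts: symmetry of Hop with respect to L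
  have hsym' : ∀ f g : Polynomial ℝ, f.natDegree + g.natDegree ≤ 2*N+1 →
      L (Hop a1 a2 b f * g) = - L (Ap a1 a2 * dlt f * dlt g) := by
    intro f g hfg
    rcases Nat.eq_zero_or_pos f.natDegree with hdf0 | hdfpos
    · have hf0 : Hop a1 a2 b f = 0 := Hop_C a1 a2 b f (le_of_eq hdf0)
      have hdlt0 : dlt f = 0 := by
        have hfc : f = C (f.coeff 0) := eq_C_of_natDegree_le_zero (le_of_eq hdf0)
        rw [dlt]
        conv_lhs => rw [hfc]
        rw [taylor_C]
        conv_lhs => rw [← hfc]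
        rw [hfc, sub_self]
      rw [hf0, hdlt0]
      simp [hL]
    obtain ⟨d, hd⟩ : ∃ d, f.natDegree = d + 1 := ⟨f.natDegree - 1, by omega⟩
    have hdltf : (dlt f).natDegree ≤ d := natDegree_dlt_le f d (le_of_eq hd)
    have hnabf : (nab f).natDegree ≤ d := natDegree_nab_le f d (le_of_eq hd)
    have hApdeg : (Ap a1 a2).natDegree ≤ 2 := by unfold Ap; compute_degree
    have hBqdeg : (Bq b).natDegree ≤ 2 := by unfold Bq; compute_degree
    have hdltg : (dlt g).natDegree ≤ g.natDegree := by
      refine (natDegree_sub_le _ _).trans ?_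
      rw [natDegree_taylor]
      simp
    have htayg : (taylor (1:ℝ) g).natDegree = g.natDegree := natDegree_taylor g 1
    set q1 : Polynomial ℝ := Ap a1 a2 * dlt f * g with hq1
    set q2 : Polynomial ℝ := Bq b * nab f * g with hq2
    set q3 : Polynomial ℝ := Ap a1 a2 * dlt f * taylor 1 g with hq3
    set q4 : Polynomial ℝ := Ap a1 a2 * dlt f * dlt g with hq4
    have hmul1 := natDegree_mul_le (p := Ap a1 a2) (q := dlt f)
    have hmul2 := natDegree_mul_le (p := Bq b) (q := nab f)
    have hd1 : q1.natDegree ≤ 2*N+2 := by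
      refine natDegree_mul_le.trans ?_
      omega
    have hd2 : q2.natDegree ≤ 2*N+2 := by
      refine natDegree_mul_le.trans ?_
      omega
    have hd3 : q3.natDegree ≤ 2*N+2 := by
      refine natDegree_mul_le.trans ?_
      omega
    have hd4 : q4.natDegree ≤ 2*N+2 := by
      refine natDegree_mul_le.trans ?_
      omega
    have estep : Hop a1 a2 b f * g = q1 - q2 := by
      rw [hq1, hq2, Hop]
      ring
    have kA : ∀ y : ℝ, (Ap a1 a2).eval y = (y+a1) * (y+a2) := by
      intro y
      simp [Ap]
      ring
    have kB : ∀ y : ℝ, (Bq b).eval y = y * (y+b) := by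
      intro y
      simp [Bq]
      ring
    have step2 : L q2 = L q3 := by
      rw [hL]
      simp only []
      rw [Summable.tsum_eq_zero_add (hsum q2 hd2)]
      have h0 : q2.eval ((0:ℕ):ℝ) * w 0 = 0 := by
        rw [hq2, eval_mul, eval_mul]
        push_cast
        rw [kB]
        ring
      rw [h0, zero_add]
      apply tsum_congr
      intro x
      have hcast : ((x+1:ℕ):ℝ) = (x:ℝ)+1 := by push_cast; ring
      rw [hcast, hq2, hq3, eval_mul, eval_mul, eval_mul, eval_mul]
      have knab : (nab f).eval ((x:ℝ)+1) = (dlt f).eval (x:ℝ) := by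
        rw [nab, dlt, eval_sub, eval_sub, taylor_eval, taylor_eval]
        norm_num
      have kg : g.eval ((x:ℝ)+1) = (taylor (1:ℝ) g).eval (x:ℝ) := by
        rw [taylor_eval]
      rw [knab, kg, kB, kA]
      linear_combination ((dlt f).eval (x:ℝ) * (taylor (1:ℝ) g).eval (x:ℝ)) * hrat x
    rw [estep, hLsub _ _ hd1 hd2, step2]
    have estep2 : q4 = q3 - q1 := by
      rw [hq1, hq3, hq4]
      simp only [dlt]
      ring
    rw [estep2, hLsub _ _ hd3 hd1]
    ring
  have hsym : ∀ f g : Polynomial ℝ, f.natDegree + g.natDegree ≤ 2*N+1 →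
      L (Hop a1 a2 b f * g) = L (Hop a1 a2 b g * f) := by
    intro f g h
    rw [hsym' f g h, hsym' g f (by omega)]
    congr 1
    rw [show Ap a1 a2 * dlt f * dlt g = Ap a1 a2 * dlt g * dlt f from by ring]
  -- a polynomial of degree ≤ k ≤ N orthogonal to P_0,...,P_k is zero
  have hzero : ∀ k : ℕ, k ≤ N → ∀ q : Polynomial ℝ, q.natDegree ≤ k →
      (∀ j, j ≤ k → L (q * P j) = 0) → q = 0 := by
    intro k
    induction k with
    | zero =>
      intro _ q hq hor
      have hqC : q = C (q.coeff 0) := eq_C_of_natDegree_le_zero hq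
      have h0 := hor 0 (le_refl 0)
      have he : q * P 0 = C (q.coeff 0) * (P 0 * P 0) := by
        conv_lhs => rw [hqC]
        rw [hP0]
        ring
      rw [he, hLsmul] at h0
      have hc : q.coeff 0 = 0 := by
        rcases mul_eq_zero.mp h0 with h | h
        · exact h
        · exact absurd h (hnormL 0 (by omega))
      rw [hqC, hc, map_zero]
    | succ k ih =>
      intro hkN q hq hor
      have hk1N : k + 1 ≤ N + 1 := by omega
      set c := q.coeff (k+1) with hcdef
      set q' : Polynomial ℝ := q - C c * P (k+1) with hq'
      have hdq' : q'.natDegree ≤ k := by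
        rw [natDegree_le_iff_coeff_eq_zero]
        intro M hM
        rw [hq', coeff_sub, coeff_C_mul]
        rcases Nat.eq_or_lt_of_le hM with h' | h'
        · rw [← h', hctop (k+1) hk1N, ← hcdef]
          ring
        · rw [coeff_eq_zero_of_natDegree_lt (by omega : q.natDegree < M),
            coeff_eq_zero_of_natDegree_lt (by rw [hdeg (k+1) hk1N]; omega)]
          ring
      have h0 := hor (k+1) (le_refl _)
      have he : q * P (k+1) = P (k+1) * q' + C c * (P (k+1) * P (k+1)) := by
        rw [hq']
        ring
      have d1 : (P (k+1) * q').natDegree ≤ 2*N+2 :=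
        natDegree_mul_le.trans (by rw [hdeg (k+1) hk1N]; omega)
      have d2 : (C c * (P (k+1) * P (k+1))).natDegree ≤ 2*N+2 :=
        (natDegree_C_mul_le _ _).trans (natDegree_mul_le.trans
          (by rw [hdeg (k+1) hk1N]; omega))
      rw [he, hLadd _ _ d1 d2, hLsmul,
        hLspan k q' hdq' (k+1) (by omega) hk1N, zero_add] at h0
      have hc : c = 0 := by
        rcases mul_eq_zero.mp h0 with h | h
        · exact h
        · exact absurd h (hnormL (k+1) (by omega))
      have hqk : q.natDegree ≤ k := by
        rw [natDegree_le_iff_coeff_eq_zero]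
        intro M hM
        rcases Nat.eq_or_lt_of_le hM with h' | h'
        · rw [← h', ← hcdef, hc]
        · exact coeff_eq_zero_of_natDegree_lt (by omega)
      exact ih (by omega) q hqk (fun j hj => hor j (by omega))
  -- the eigenfunction property
  have heig : ∀ n, n ≤ N + 1 → Hop a1 a2 b (P n) = C (lam a1 a2 b n) * P n := by
    intro n hn
    rcases Nat.eq_zero_or_pos n with rfl | hnpos
    · rw [hP0, show lam a1 a2 b 0 = 0 from by simp [lam], map_zero, zero_mul]
      exact Hop_C a1 a2 b 1 (by simp)
    obtain ⟨m, rfl⟩ : ∃ m, n = m + 1 := ⟨n-1, by omega⟩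
    set Q : Polynomial ℝ := Hop a1 a2 b (P (m+1)) - C (lam a1 a2 b (m+1)) * P (m+1) with hQ
    have hdegP : (P (m+1)).natDegree ≤ m + 1 := le_of_eq (hdeg (m+1) hn)
    have hdQ : Q.natDegree ≤ m := by
      have h := natDegree_Hop_sub_le a1 a2 b (P (m+1)) (m+1) (by omega) hdegP
      simpa using h
    have horQ : ∀ j, j ≤ m → L (Q * P j) = 0 := by
      intro j hj
      have hjN1 : j ≤ N + 1 := by omega
      have e : Q * P j = Hop a1 a2 b (P (m+1)) * P j
          - C (lam a1 a2 b (m+1)) * (P (m+1) * P j) := by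
        rw [hQ]
        ring
      have hdHop : (Hop a1 a2 b (P (m+1))).natDegree ≤ m+1 :=
        natDegree_Hop_le a1 a2 b (P (m+1)) (m+1) hdegP
      have d1 : (Hop a1 a2 b (P (m+1)) * P j).natDegree ≤ 2*N+2 :=
        natDegree_mul_le.trans (by rw [hdeg j hjN1]; omega)
      have d2 : (C (lam a1 a2 b (m+1)) * (P (m+1) * P j)).natDegree ≤ 2*N+2 :=
        (natDegree_C_mul_le _ _).trans (natDegree_mul_le.trans
          (by rw [hdeg (m+1) hn, hdeg j hjN1]; omega))
      rw [e, hLsub _ _ d1 d2, hLsmul, horthL (m+1) j hn hjN1 (by omega),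
        hsym (P (m+1)) (P j) (by rw [hdeg (m+1) hn, hdeg j hjN1]; omega),
        show Hop a1 a2 b (P j) * P (m+1) = P (m+1) * Hop a1 a2 b (P j) from mul_comm _ _,
        hLspan j (Hop a1 a2 b (P j))
          (natDegree_Hop_le a1 a2 b (P j) j (le_of_eq (hdeg j hjN1))) (m+1) (by omega) hn]
      ring
    have hQ0 := hzero m (by omega) Q hdQ horQ
    rw [hQ] at hQ0
    exact sub_eq_zero.mp hQ0
  -- subleading coefficient of P_{m+1}
  have hlamstep : ∀ m : ℕ, lam a1 a2 b (m+1) - lam a1 a2 b m = 2*(m:ℝ) + (a1+a2) - b := by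
    intro m
    simp only [lam]
    push_cast
    ring
  have hpcoef : ∀ m : ℕ, m + 1 ≤ N + 1 →
      (P (m+1)).coeff m * (2*(m:ℝ) + (a1+a2) - b) = cay a1 a2 b (m+1) := by
    intro m hm
    have he := heig (m+1) hm
    have hcoeff := congrArg (fun p => p.coeff m) he
    simp only [coeff_C_mul] at hcoeff
    rw [Hop_coeff_sub a1 a2 b (P (m+1)) m (le_of_eq (hdeg (m+1) hm)), hctop (m+1) hm]
      at hcoeff
    linear_combination (-(1:ℝ)) * hcoeff + (-(P (m+1)).coeff m) * hlamstep m
  have hcay : ∀ k : ℕ, cay a1 a2 b k = (k:ℝ)*((k:ℝ)-1)/2*(a1+a2+b) + (k:ℝ)*(a1*a2) := by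
    intro k
    rw [cay, Nat.cast_choose_two]
  -- final computation
  intro n hn
  have hnr : (n:ℝ) ≤ (N:ℝ) := by exact_mod_cast hn
  rcases Nat.eq_zero_or_pos n with rfl | hnpos
  · have hr := hrec 0 (by omega)
    rw [hP0, hγ0] at hr
    simp only [map_zero, zero_mul, add_zero, mul_one] at hr
    have hc := congrArg (fun p => p.coeff 0) hr
    simp only [coeff_add, coeff_C_mul, coeff_X_zero, coeff_C_zero, coeff_C] at hc
    -- hc : 0 = (P 1).coeff 0 + β 0
    have hp1 := hpcoef 0 (by omega)
    rw [hcay 1] at hp1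
    push_cast at hp1 hc ⊢
    have hβ : β 0 = -(P 1).coeff 0 := by linarith
    rw [hβ, eq_div_iff (by nlinarith : ((2*(0:ℝ) + a1 + a2 - b) * (2*(0:ℝ) + a1 + a2 - b - 2)) ≠ 0)]
    linear_combination (b + 2 - a1 - a2) * hp1
  · obtain ⟨m, rfl⟩ : ∃ m, n = m + 1 := ⟨n-1, by omega⟩
    have hm1 : m + 1 ≤ N + 1 := by omega
    have hm2 : m + 2 ≤ N + 1 := by omega
    have hr := hrec (m+1) hn
    have hc := congrArg (fun p => p.coeff (m+1)) hr
    simp only [coeff_add, coeff_C_mul] at hc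
    rw [coeff_X_mul, hctop (m+1) hm1, show (m+1) - 1 = m from rfl,
      coeff_eq_zero_of_natDegree_lt (by rw [hdeg m (by omega)]; omega :
        (P m).natDegree < m + 1)] at hc
    -- hc : (P (m+1)).coeff m = (P (m+2)).coeff (m+1) + β (m+1) * 1 + γ (m+1) * 0
    have hp1 := hpcoef m hm1
    have hp2 := hpcoef (m+1) hm2
    rw [hcay (m+1)] at hp1
    rw [hcay (m+2)] at hp2
    have hmr : (m:ℝ) + 1 ≤ (N:ℝ) := by exact_mod_cast hn
    have hD1 : (2*(m:ℝ) + (a1+a2) - b) ≠ 0 := by nlinarith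
    have hD2 : (2*((m:ℝ)+1) + (a1+a2) - b) ≠ 0 := by nlinarith
    push_cast at hp1 hp2 hc ⊢
    have hβ : β (m+1) = (P (m+1)).coeff m - (P (m+2)).coeff (m+1) := by linarith
    rw [hβ, eq_div_iff (by push_cast at hD1 hD2 ⊢; nlinarith [hD1, hD2] :
      ((2*((m:ℝ)+1) + a1 + a2 - b) * (2*((m:ℝ)+1) + a1 + a2 - b - 2)) ≠ 0)]
    linear_combination (2*((m:ℝ)+1) + a1 + a2 - b) * hp1 - (2*(m:ℝ) + a1 + a2 - b) * hp2
end

section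
/- Let a1, a2, b be real numbers such that 2n + a1 + a2 − b ≠ 0 and 2n + a1 + a2 − b − 2 ≠ 0 for every integer n ≥ 0. Suppose the sequence (β_n)_{n≥0} of real numbers satisfies β_0 = a1 a2/(b − a1 − a2) and, for every n ≥ 1, β_n = [(2n + a1 + a2 − b − 4)/(2n + a1 + a2 − b)]·β_{n−1} − (a1 + a2 + b)/(2n + a1 + a2 − b). Then for every n ≥ 0: β_n = [ (b + 2 − a1 − a2) a1 a2 − n (a1 + a2 + b)(n + a1 + a2 − b − 1) ] / [ (2n + a1 + a2 − b)(2n + a1 + a2 − b − 2) ]. -/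
/-- closed-form solution of the first-order linear recurrence
βₙ = [(2n+a₁+a₂−b−4)/(2n+a₁+a₂−b)]β_{n−1} − (a₁+a₂+b)/(2n+a₁+a₂−b)
with β₀ = a₁a₂/(b−a₁−a₂). -/
theorem hahn_beta_recurrence_solution
    (a1 a2 b : ℝ)
    (hden : ∀ n : ℕ, 2 * (n : ℝ) + a1 + a2 - b ≠ 0 ∧
                     2 * (n : ℝ) + a1 + a2 - b - 2 ≠ 0)
    (β : ℕ → ℝ)
    (hβ0 : β 0 = a1 * a2 / (b - a1 - a2))
    (hrec : ∀ n : ℕ, 1 ≤ n →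
      β n = (2 * (n : ℝ) + a1 + a2 - b - 4) / (2 * (n : ℝ) + a1 + a2 - b)
              * β (n - 1)
            - (a1 + a2 + b) / (2 * (n : ℝ) + a1 + a2 - b)) :
    ∀ n : ℕ,
      β n = ((b + 2 - a1 - a2) * a1 * a2
              - (n : ℝ) * (a1 + a2 + b) * ((n : ℝ) + a1 + a2 - b - 1)) /
            ((2 * (n : ℝ) + a1 + a2 - b) * (2 * (n : ℝ) + a1 + a2 - b - 2)) := by
  intro n
  induction n with
  | zero =>
    have h1 := (hden 0).1
    have h2 := (hden 0).2
    norm_num at h1 h2 ⊢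
    rw [hβ0]
    have hb : b - a1 - a2 ≠ 0 := by intro h; apply h1; linarith
    rw [div_eq_div_iff hb (mul_ne_zero h1 h2)]
    ring
  | succ n ih =>
    have hr := hrec (n + 1) (Nat.le_add_left 1 n)
    simp only [Nat.add_sub_cancel] at hr
    rw [hr, ih]
    have h1 := (hden n).1
    have h2 := (hden n).2
    have h3 := (hden (n + 1)).1
    have h4 := (hden (n + 1)).2
    push_cast at h1 h2 h3 h4 ⊢
    field_simp
    ring
end
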